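/- arXiv:math/0605372 — 4 statements merged into one kernel-verified Lean document; each statement's English description precedes it below -/
import Mathlib

section
/- Let k be a field, E_1,...,E_n finite-dimensional k-vector spaces of common dimension d, with linear maps f_i : E_i → E_{i+1} and g_i : E_{i+1} → E_i such that f_i ∘ g_i = 0 and g_i ∘ f_i = 0 for all i, ker f_i = im g_i and ker g_i = im f_i for all i, and im f_i ∩ ker f_{i+1} = 0, im g_{i+1} ∩ ker g_i = 0 for all applicable i. Then for each i with 2 ≤ i ≤ n−1, the map (g_{i-1,1}, f_{i,n-1}) : E_i → E_1 ⊕ E_n given by v ↦ (g_1∘...∘g_{i-1}(v), f_{n-1}∘...∘f_i(v)) is injective. -/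
/-!
Linked Grassmannian chain (Osserman), 0-indexed: spaces `E 0, …, E (n-1)`
correspond to the paper's `E_1, …, E_n`.  `G i` is the composite
`g_{i-1,1} = g_1 ∘ … ∘ g_{i-1} : E_i → E_1` and `F i` is the composite
`f_{i,n-1} = f_{n-1} ∘ … ∘ f_i : E_i → E_n`, characterized by the
recurrences below.  Axioms are the linked Grassmannian axioms with `s = 0`.

STATEMENT 0: for `2 ≤ i ≤ n-1` (here `1 ≤ i` and `i + 2 ≤ n`), the map
`v ↦ (g_{i-1,1} v, f_{i,n-1} v) : E_i → E_1 ⊕ E_n` is injective.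
-/
theorem linked_grassmannian_prod_injective
    (k : Type*) [Field k] (n : ℕ)
    (E : ℕ → Type*) [∀ i, AddCommGroup (E i)] [∀ i, Module k (E i)]
    (f : ∀ i, E i →ₗ[k] E (i + 1)) (g : ∀ i, E (i + 1) →ₗ[k] E i)
    [∀ i, FiniteDimensional k (E i)] (d : ℕ)
    (hdim : ∀ i, i + 1 ≤ n → Module.finrank k (E i) = d)
    (hfg : ∀ i, i + 2 ≤ n → (f i).comp (g i) = 0)
    (hgf : ∀ i, i + 2 ≤ n → (g i).comp (f i) = 0)
    (hker_f : ∀ i, i + 2 ≤ n → LinearMap.ker (f i) = LinearMap.range (g i))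
    (hker_g : ∀ i, i + 2 ≤ n → LinearMap.ker (g i) = LinearMap.range (f i))
    (hIII_f : ∀ i, i + 3 ≤ n →
      LinearMap.range (f i) ⊓ LinearMap.ker (f (i + 1)) = ⊥)
    (hIII_g : ∀ i, i + 3 ≤ n →
      LinearMap.range (g (i + 1)) ⊓ LinearMap.ker (g i) = ⊥)
    (G : ∀ i, E i →ₗ[k] E 0) (hG0 : G 0 = LinearMap.id)
    (hGs : ∀ i, i + 2 ≤ n → G (i + 1) = (G i).comp (g i))
    (F : ∀ i, E i →ₗ[k] E (n - 1)) (hFn : F (n - 1) = LinearMap.id)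
    (hFs : ∀ i, i + 2 ≤ n → F i = (F (i + 1)).comp (f i))
    (i : ℕ) (hi1 : 1 ≤ i) (hi2 : i + 2 ≤ n) :
    Function.Injective ((G i).prod (F i)) := by
  obtain ⟨j, rfl⟩ : ∃ j, i = j + 1 := ⟨i - 1, (Nat.succ_pred_eq_of_pos hi1).symm⟩
  have hG : ∀ t, t + 2 ≤ n → LinearMap.ker (G (t + 1)) = LinearMap.ker (g t) := by
    intro t
    induction t with
    | zero =>
      intro h
      rw [hGs 0 h, hG0, LinearMap.ker_comp]
      simp
    | succ s ih =>
      intro h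
      rw [hGs (s + 1) h, LinearMap.ker_comp, ih (by omega)]
      apply le_antisymm
      · intro x hx
        simp only [Submodule.mem_comap] at hx
        have hm : g (s + 1) x ∈ LinearMap.range (g (s + 1)) ⊓ LinearMap.ker (g s) :=
          ⟨⟨x, rfl⟩, hx⟩
        rw [hIII_g s (by omega)] at hm
        simpa using hm
      · intro x hx
        simp only [Submodule.mem_comap]
        rw [LinearMap.mem_ker.mp hx]
        simp
  have hF : ∀ t i', i' + 2 + t = n → LinearMap.ker (F i') = LinearMap.ker (f i') := by
    intro t
    induction t with
    | zero =>
      intro i' h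
      subst h
      rw [hFs i' (by omega)]
      have hid : F (i' + 1) = LinearMap.id := hFn
      rw [hid, LinearMap.id_comp]
    | succ s ih =>
      intro i' h
      rw [hFs i' (by omega), LinearMap.ker_comp, ih (i' + 1) (by omega)]
      apply le_antisymm
      · intro x hx
        simp only [Submodule.mem_comap] at hx
        have hm : f i' x ∈ LinearMap.range (f i') ⊓ LinearMap.ker (f (i' + 1)) :=
          ⟨⟨x, rfl⟩, hx⟩
        rw [hIII_f i' (by omega)] at hm
        simpa using hm
      · intro x hx
        simp only [Submodule.mem_comap]
        rw [LinearMap.mem_ker.mp hx]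
        simp
  rw [← LinearMap.ker_eq_bot, LinearMap.ker_prod, hG j (by omega),
    hF (n - (j + 3)) (j + 1) (by omega), hker_g j (by omega), hIII_f j (by omega)]
end

section
/- Under the linked Grassmannian axioms with s = 0, suppose subspaces V_i ⊆ E_i (1 ≤ i ≤ n) satisfy f_i(V_i) ⊆ V_{i+1} and g_i(V_{i+1}) ⊆ V_i for all i. For 2 ≤ i ≤ n−1, let V_{1,i} := g_{i-1,1}(V_i) ⊆ V_1 and V_{n,i} := f_{i,n-1}(V_i) ⊆ V_n, and let Z̄_i be the cokernel of the injection (g_{i-1,1}, f_{i,n-1}) : g_{i-1,1}^{-1}(V_1) ∩ f_{i,n-1}^{-1}(V_n) → V̄_{1,i} ⊕ V̄_{n,i}. Then the images of V_{1,i} ⊕ 0 and of 0 ⊕ V_{n,i} in Z̄_i coincide. -/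
/-!
Linked Grassmannian chain with `s = 0`, 0-indexed.  `G i = g_{i-1,1}`,
`F i = f_{i,n-1}`.  Subspaces `V i ⊆ E i` are linked: `f_i(V_i) ⊆ V_{i+1}`,
`g_i(V_{i+1}) ⊆ V_i`.

STATEMENT 4: for `2 ≤ i ≤ n-1` (0-indexed `1 ≤ i ≤ n-2`), let `K` be the image
of `g_{i-1,1}^{-1}(V_1) ∩ f_{i,n-1}^{-1}(V_n)` under `(g_{i-1,1}, f_{i,n-1})`;
the cokernel `Z̄_i` is realized inside the quotient of `E_1 ⊕ E_n` by `K`.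
Then the images of `V_{1,i} ⊕ 0` and `0 ⊕ V_{n,i}` in this quotient coincide,
where `V_{1,i} = g_{i-1,1}(V_i)`, `V_{n,i} = f_{i,n-1}(V_i)`.
-/
theorem linked_grassmannian_images_agree_in_cokernel
    (k : Type*) [Field k] (n : ℕ)
    (E : ℕ → Type*) [∀ i, AddCommGroup (E i)] [∀ i, Module k (E i)]
    (f : ∀ i, E i →ₗ[k] E (i + 1)) (g : ∀ i, E (i + 1) →ₗ[k] E i)
    (hfg : ∀ i, i + 2 ≤ n → (f i).comp (g i) = 0)
    (hgf : ∀ i, i + 2 ≤ n → (g i).comp (f i) = 0)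
    (hker_f : ∀ i, i + 2 ≤ n → LinearMap.ker (f i) = LinearMap.range (g i))
    (hker_g : ∀ i, i + 2 ≤ n → LinearMap.ker (g i) = LinearMap.range (f i))
    (hIII_f : ∀ i, i + 3 ≤ n →
      LinearMap.range (f i) ⊓ LinearMap.ker (f (i + 1)) = ⊥)
    (hIII_g : ∀ i, i + 3 ≤ n →
      LinearMap.range (g (i + 1)) ⊓ LinearMap.ker (g i) = ⊥)
    (G : ∀ i, E i →ₗ[k] E 0) (hG0 : G 0 = LinearMap.id)
    (hGs : ∀ i, i + 2 ≤ n → G (i + 1) = (G i).comp (g i))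
    (F : ∀ i, E i →ₗ[k] E (n - 1)) (hFn : F (n - 1) = LinearMap.id)
    (hFs : ∀ i, i + 2 ≤ n → F i = (F (i + 1)).comp (f i))
    (V : ∀ i, Submodule k (E i))
    (hVf : ∀ i, i + 2 ≤ n → Submodule.map (f i) (V i) ≤ V (i + 1))
    (hVg : ∀ i, i + 2 ≤ n → Submodule.map (g i) (V (i + 1)) ≤ V i)
    (i : ℕ) (hi1 : 1 ≤ i) (hi2 : i + 2 ≤ n)
    (K : Submodule k (E 0 × E (n - 1)))
    (hK : K = Submodule.map ((G i).prod (F i))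
      (Submodule.comap (G i) (V 0) ⊓ Submodule.comap (F i) (V (n - 1)))) :
    Submodule.map K.mkQ
        (Submodule.map (LinearMap.inl k (E 0) (E (n - 1)))
          (Submodule.map (G i) (V i)))
      = Submodule.map K.mkQ
        (Submodule.map (LinearMap.inr k (E 0) (E (n - 1)))
          (Submodule.map (F i) (V i))) := by
  have hn2 : 2 ≤ n := by omega
  -- G j maps V j into V 0
  have hGle : ∀ j, j + 1 ≤ n → Submodule.map (G j) (V j) ≤ V 0 := by
    intro j
    induction j with
    | zero => intro _; rw [hG0, Submodule.map_id]
    | succ m ih =>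
      intro hm
      have hm2 : m + 2 ≤ n := by omega
      rw [hGs m hm2, Submodule.map_comp]
      exact le_trans (Submodule.map_mono (hVg m hm2)) (ih (by omega))
  -- F j maps V j into V (n-1)
  have hFle : ∀ d j, j + d = n - 1 → Submodule.map (F j) (V j) ≤ V (n - 1) := by
    intro d
    induction d with
    | zero =>
      intro j hj
      subst hj
      rw [hFn, Submodule.map_id]
    | succ m ih =>
      intro j hj
      have hj2 : j + 2 ≤ n := by omega
      rw [hFs j hj2, Submodule.map_comp]
      exact le_trans (Submodule.map_mono (hVf j hj2)) (ih (j + 1) (by omega))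
  have hGV : ∀ v ∈ V i, G i v ∈ V 0 := fun v hv => hGle i (by omega) ⟨v, hv, rfl⟩
  have hFV : ∀ v ∈ V i, F i v ∈ V (n - 1) :=
    fun v hv => hFle (n - 1 - i) i (by omega) ⟨v, hv, rfl⟩
  have key : ∀ v ∈ V i, (K.mkQ) (G i v, 0) = - (K.mkQ) (0, F i v) := by
    intro v hv
    rw [← LinearMap.map_neg, Submodule.mkQ_apply, Submodule.mkQ_apply,
      Submodule.Quotient.eq, hK]
    refine ⟨v, ⟨hGV v hv, hFV v hv⟩, ?_⟩
    simp [Prod.ext_iff, sub_neg_eq_add]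
  apply le_antisymm
  · rintro x ⟨_, ⟨_, ⟨v, hv, rfl⟩, rfl⟩, rfl⟩
    rw [show ((LinearMap.inl k (E 0) (E (n - 1))) (G i v)) = (G i v, (0 : E (n - 1))) from rfl,
      key v hv]
    exact Submodule.neg_mem _ ⟨_, ⟨F i v, ⟨v, hv, rfl⟩, rfl⟩, rfl⟩
  · rintro x ⟨_, ⟨_, ⟨v, hv, rfl⟩, rfl⟩, rfl⟩
    rw [show ((LinearMap.inr k (E 0) (E (n - 1))) (F i v)) = ((0 : E 0), F i v) from rfl,
      ← neg_neg (K.mkQ (0, F i v)), ← key v hv]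
    exact Submodule.neg_mem _ ⟨_, ⟨G i v, ⟨v, hv, rfl⟩, rfl⟩, rfl⟩
end

section
/- Under the linked Grassmannian axioms with s = 0, for each i with 2 ≤ i ≤ n−1, the map E_i → g_{i-1,1}(E_i) ⊕ f_{i,n-1}(E_i) given by v ↦ (g_{i-1,1}(v), f_{i,n-1}(v)) is injective, and its cokernel Z̃_i satisfies: both g_{i-1,1}(E_i) ⊕ 0 and 0 ⊕ f_{i,n-1}(E_i) surject onto Z̃_i. -/
/-!
Linked Grassmannian chain with `s = 0`, 0-indexed; `G i = g_{i-1,1}`,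
`F i = f_{i,n-1}`.

STATEMENT 5: for `2 ≤ i ≤ n-1` (0-indexed `1 ≤ i ≤ n-2`), the map
`v ↦ (g_{i-1,1} v, f_{i,n-1} v)` is injective, and in the cokernel `Z̃_i`
(realized as the quotient of `E_1 ⊕ E_n` by the image `R` of `E_i`) the images
of `g_{i-1,1}(E_i) ⊕ 0` and of `0 ⊕ f_{i,n-1}(E_i)` each coincide with the image
of `g_{i-1,1}(E_i) ⊕ f_{i,n-1}(E_i)`, i.e. each factor surjects onto `Z̃_i`.
-/
theorem linked_grassmannian_tildeZ
    (k : Type*) [Field k] (n : ℕ)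
    (E : ℕ → Type*) [∀ i, AddCommGroup (E i)] [∀ i, Module k (E i)]
    (f : ∀ i, E i →ₗ[k] E (i + 1)) (g : ∀ i, E (i + 1) →ₗ[k] E i)
    (hfg : ∀ i, i + 2 ≤ n → (f i).comp (g i) = 0)
    (hgf : ∀ i, i + 2 ≤ n → (g i).comp (f i) = 0)
    (hker_f : ∀ i, i + 2 ≤ n → LinearMap.ker (f i) = LinearMap.range (g i))
    (hker_g : ∀ i, i + 2 ≤ n → LinearMap.ker (g i) = LinearMap.range (f i))
    (hIII_f : ∀ i, i + 3 ≤ n →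
      LinearMap.range (f i) ⊓ LinearMap.ker (f (i + 1)) = ⊥)
    (hIII_g : ∀ i, i + 3 ≤ n →
      LinearMap.range (g (i + 1)) ⊓ LinearMap.ker (g i) = ⊥)
    (G : ∀ i, E i →ₗ[k] E 0) (hG0 : G 0 = LinearMap.id)
    (hGs : ∀ i, i + 2 ≤ n → G (i + 1) = (G i).comp (g i))
    (F : ∀ i, E i →ₗ[k] E (n - 1)) (hFn : F (n - 1) = LinearMap.id)
    (hFs : ∀ i, i + 2 ≤ n → F i = (F (i + 1)).comp (f i))
    (i : ℕ) (hi1 : 1 ≤ i) (hi2 : i + 2 ≤ n)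
    (R : Submodule k (E 0 × E (n - 1)))
    (hR : R = LinearMap.range ((G i).prod (F i))) :
    Function.Injective ((G i).prod (F i)) ∧
      Submodule.map R.mkQ
          ((LinearMap.range (G i)).prod (⊥ : Submodule k (E (n - 1))))
        = Submodule.map R.mkQ
          ((LinearMap.range (G i)).prod (LinearMap.range (F i))) ∧
      Submodule.map R.mkQ
          ((⊥ : Submodule k (E 0)).prod (LinearMap.range (F i)))
        = Submodule.map R.mkQ
          ((LinearMap.range (G i)).prod (LinearMap.range (F i))) := by

  subst hR
  obtain ⟨j, rfl⟩ : ∃ j, i = j + 1 := ⟨i - 1, (Nat.succ_pred_eq_of_pos hi1).symm⟩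
  -- kernel of the composite G equals kernel of the last g
  have kerG : ∀ m, m + 2 ≤ n → LinearMap.ker (G (m + 1)) = LinearMap.ker (g m) := by
    intro m
    induction m with
    | zero => intro h; rw [hGs 0 h, hG0, LinearMap.id_comp]
    | succ m ih =>
      intro h
      rw [hGs (m + 1) h, LinearMap.ker_comp, ih (by omega)]
      ext v
      simp only [Submodule.mem_comap, LinearMap.mem_ker]
      constructor
      · intro hv
        have hmem : g (m + 1) v ∈ LinearMap.range (g (m + 1)) ⊓ LinearMap.ker (g m) :=
          ⟨⟨v, rfl⟩, hv⟩
        rw [hIII_g m (by omega)] at hmem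
        simpa using hmem
      · intro hv; rw [hv]; simp
  -- kernel of the composite F equals kernel of the first f
  have kerF : ∀ m l, l + 2 ≤ n → n ≤ l + 2 + m →
      LinearMap.ker (F l) = LinearMap.ker (f l) := by
    intro m
    induction m with
    | zero =>
      intro l h1 h2
      have hn : n = l + 2 := by omega
      subst hn
      have hid : F (l + 1) = LinearMap.id := hFn
      rw [hFs l h1, hid, LinearMap.id_comp]
    | succ m ih =>
      intro l h1 h2
      rcases Nat.lt_or_ge (l + 2) n with hlt | hge
      · rw [hFs l h1, LinearMap.ker_comp, ih (l + 1) (by omega) (by omega)]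
        ext v
        simp only [Submodule.mem_comap, LinearMap.mem_ker]
        constructor
        · intro hv
          have hmem : f l v ∈ LinearMap.range (f l) ⊓ LinearMap.ker (f (l + 1)) :=
            ⟨⟨v, rfl⟩, hv⟩
          rw [hIII_f l (by omega)] at hmem
          simpa using hmem
        · intro hv; rw [hv]; simp
      · have hn : n = l + 2 := by omega
        subst hn
        have hid : F (l + 1) = LinearMap.id := hFn
        rw [hFs l h1, hid, LinearMap.id_comp]
  have hinj : LinearMap.ker ((G (j + 1)).prod (F (j + 1))) = ⊥ := by
    rw [LinearMap.ker_prod, kerG j (by omega), kerF n (j + 1) hi2 (by omega),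
      hker_g j (by omega), hker_f (j + 1) hi2]
    refine le_bot_iff.mp ?_
    rintro v ⟨⟨u, rfl⟩, w, hw⟩
    have hfv : f (j + 1) (f j u) = 0 := by
      rw [← hw]
      exact LinearMap.congr_fun (hfg (j + 1) hi2) w
    have hmem : f j u ∈ LinearMap.range (f j) ⊓ LinearMap.ker (f (j + 1)) :=
      ⟨⟨u, rfl⟩, hfv⟩
    rw [hIII_f j (by omega)] at hmem
    simpa using hmem
  refine ⟨LinearMap.ker_eq_bot.mp hinj, ?_, ?_⟩
  · refine le_antisymm (Submodule.map_mono (Submodule.prod_mono le_rfl bot_le)) ?_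
    rintro z hz
    obtain ⟨p, hp, rfl⟩ := hz
    simp only [SetLike.mem_coe, Submodule.mem_prod] at hp
    obtain ⟨x, hx⟩ := hp.1
    obtain ⟨y, hy⟩ := hp.2
    refine ⟨(G (j + 1) (x - y), 0), ⟨⟨x - y, rfl⟩, (Submodule.mem_bot k).mpr rfl⟩, ?_⟩
    refine (Submodule.Quotient.eq _).2 ⟨-y, ?_⟩
    apply Prod.ext <;>
      simp [LinearMap.prod_apply, map_sub, map_neg, hx, hy]
  · refine le_antisymm (Submodule.map_mono (Submodule.prod_mono bot_le le_rfl)) ?_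
    rintro z hz
    obtain ⟨p, hp, rfl⟩ := hz
    simp only [SetLike.mem_coe, Submodule.mem_prod] at hp
    obtain ⟨x, hx⟩ := hp.1
    obtain ⟨y, hy⟩ := hp.2
    refine ⟨(0, F (j + 1) (y - x)), ⟨(Submodule.mem_bot k).mpr rfl, ⟨y - x, rfl⟩⟩, ?_⟩
    refine (Submodule.Quotient.eq _).2 ⟨-x, ?_⟩
    apply Prod.ext <;>
      simp [LinearMap.prod_apply, map_sub, map_neg, hx, hy]
end

section
/- Let a_0 < ... < a_r and a'_0 < ... < a'_r be strictly increasing sequences of integers in [0, d], and suppose that for some fixed index j_0 we have d ≤ a_{j_0} + a'_{r−j_0} ≤ d+1, while a_j + a'_{r−j} = d for all j ≠ j_0. Then for every integer i with 0 ≤ i ≤ d, setting d_i := #{j : a_j ≥ i} and e_i := #{j : a'_j ≥ d − i}, one has d_i + e_i ≤ r+2, and d_i + e_i = r+2 only if i = a_j for some j or i = d − a'_j for some j. -/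
/-!
STATEMENT 16: combinatorial core of the final Lemma of Osserman's paper
(codimension-1 crude limit series).  `a, a'` are strictly increasing sequences
in `[0, d]` with `d ≤ a_{j₀} + a'_{r−j₀} ≤ d+1` and `a_j + a'_{r−j} = d` for
`j ≠ j₀`.  Then for `0 ≤ i ≤ d`, with `d_i := #{j : a_j ≥ i}`,
`e_i := #{j : a'_j ≥ d − i}`, one has `d_i + e_i ≤ r+2`, with equality only if
`i = a_j` for some `j` or `i = d − a'_j` for some `j`.
-/
theorem crude_codim_one_vanishing_count
    (r d : ℕ) (a a' : Fin (r + 1) → ℕ)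
    (ha : StrictMono a) (ha' : StrictMono a')
    (had : ∀ j, a j ≤ d) (ha'd : ∀ j, a' j ≤ d)
    (j₀ : Fin (r + 1))
    (hj₀lo : d ≤ a j₀ + a' j₀.rev) (hj₀hi : a j₀ + a' j₀.rev ≤ d + 1)
    (hrest : ∀ j : Fin (r + 1), j ≠ j₀ → a j + a' j.rev = d)
    (i : ℕ) (hi : i ≤ d)
    (di ei : ℕ)
    (hdi : di = (Finset.univ.filter (fun j : Fin (r + 1) => i ≤ a j)).card)
    (hei : ei = (Finset.univ.filter (fun j : Fin (r + 1) => d - i ≤ a' j)).card) :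
    di + ei ≤ r + 2 ∧
      (di + ei = r + 2 →
        (∃ j : Fin (r + 1), a j = i) ∨ (∃ j : Fin (r + 1), d - a' j = i)) := by
  have key1 : ∀ j : Fin (r + 1), a j + a' j.rev ≤ d + 1 := by
    intro j
    by_cases h : j = j₀
    · subst h; exact hj₀hi
    · rw [hrest j h]; omega
  have key2 : ∀ j k : Fin (r + 1), a j < a k →
      i ≤ a j → d - i ≤ a' j.rev → d - i ≤ a' k.rev → False := by
    intro j k hjk hij hj' hk'
    have h1 := key1 k
    have hik : i + 1 ≤ a k := by omega
    have hk2 : a' k.rev = d - i := by omega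
    by_cases hk0 : k = j₀
    · have hjne : j ≠ j₀ := by
        rintro rfl
        subst hk0
        exact lt_irrefl _ hjk
      have hr := hrest j hjne
      have hjrev : a' j.rev = a' k.rev := by omega
      have : j = k := Fin.rev_injective (ha'.injective hjrev)
      omega
    · have hr := hrest k hk0
      omega
  set T : Finset (Fin (r + 1)) :=
    Finset.univ.filter (fun j => i ≤ a j ∧ d - i ≤ a' j.rev) with hT
  have hTcard : T.card ≤ 1 := by
    apply Finset.card_le_one.2
    intro j hj k hk
    simp only [hT, Finset.mem_filter] at hj hk
    rcases lt_trichotomy (a j) (a k) with h | h | h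
    · exact (key2 j k h hj.2.1 hj.2.2 hk.2.2).elim
    · exact ha.injective h
    · exact (key2 k j h hk.2.1 hk.2.2 hj.2.2).elim
  have hsum : di + ei = ∑ j : Fin (r + 1),
      ((if i ≤ a j then 1 else 0) + (if d - i ≤ a' j.rev then 1 else 0)) := by
    rw [Finset.sum_add_distrib, hdi, hei, Finset.card_filter, Finset.card_filter]
    congr 1
    exact (Equiv.sum_comp Fin.revPerm (fun j => if d - i ≤ a' j then 1 else 0)).symm
  have hle : ∑ j : Fin (r + 1),
      ((if i ≤ a j then 1 else 0) + (if d - i ≤ a' j.rev then 1 else 0))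
      ≤ (r + 1) + T.card := by
    have h1 : ∑ j : Fin (r + 1),
        ((if i ≤ a j then 1 else 0) + (if d - i ≤ a' j.rev then 1 else 0))
        ≤ ∑ j : Fin (r + 1),
          (1 + if i ≤ a j ∧ d - i ≤ a' j.rev then 1 else 0) := by
      apply Finset.sum_le_sum
      intro j _
      by_cases h1 : i ≤ a j <;> by_cases h2 : d - i ≤ a' j.rev <;>
        simp [h1, h2]
    calc _ ≤ _ := h1
      _ = (r + 1) + T.card := by
        rw [Finset.sum_add_distrib, Finset.sum_const, hT, Finset.card_filter]
        simp [mul_comm]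
  have hmain : di + ei ≤ r + 1 + T.card := hsum ▸ hle
  constructor
  · omega
  · intro heq
    have hpos : 0 < T.card := by omega
    obtain ⟨j, hj⟩ := Finset.card_pos.mp hpos
    simp only [hT, Finset.mem_filter] at hj
    by_cases h : a j = i
    · exact Or.inl ⟨j, h⟩
    · have hk := key1 j
      have : a' j.rev = d - i := by omega
      exact Or.inr ⟨j.rev, by omega⟩
end
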